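/- arXiv:2202.07997 — 2 statements merged into one kernel-verified Lean document; each statement's English description precedes it below -/
import Mathlib

section
/- Let V be a 4-dimensional real vector space and let e^1, e^2, e^3 ∈ V* be linearly independent. If S^1, S^2, S^3 ∈ V* satisfy ε_{ijk} e^j ∧ S^k = 0 in Λ²V* for each i ∈ {1,2,3}, then S^1 = S^2 = S^3 = 0. -/
open ExteriorAlgebra

/-- The 3-dimensional Levi-Civita symbol with `eps3 0 1 2 = 1`. -/
noncomputable def eps3 (i j k : Fin 3) : ℝ :=
  (((j.val : ℝ) - i.val) * ((k.val : ℝ) - i.val) * ((k.val : ℝ) - j.val)) / 2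

section aux
variable {V : Type*} [AddCommGroup V] [Module ℝ V]

/-- The alternating 2-form `(x, y) ↦ φ x * ψ y - ψ x * φ y`. -/
noncomputable def wform (φ ψ : V →ₗ[ℝ] ℝ) : V [⋀^Fin 2]→ₗ[ℝ] ℝ where
  toMultilinearMap :=
    (MultilinearMap.mkPiAlgebra ℝ (Fin 2) ℝ).compLinearMap ![φ, ψ]
    - (MultilinearMap.mkPiAlgebra ℝ (Fin 2) ℝ).compLinearMap ![ψ, φ]
  map_eq_zero_of_eq' := by
    intro v i j hij hne
    have hv : v 0 = v 1 := by fin_cases i <;> fin_cases j <;> simp_all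
    simp [MultilinearMap.compLinearMap_apply, MultilinearMap.mkPiAlgebra_apply,
      Fin.prod_univ_two, hv]
    ring

lemma lift_wform (φ ψ : V →ₗ[ℝ] ℝ) (x y : V) :
    liftAlternating (R := ℝ) (Pi.single 2 (wform φ ψ)) (ι ℝ x * ι ℝ y)
      = φ x * ψ y - ψ x * φ y := by
  have hxy : ι ℝ x * ι ℝ y = ιMulti ℝ 2 ![x, y] := by
    rw [ιMulti_apply]
    simp [List.ofFn_succ]
  rw [hxy, liftAlternating_apply_ιMulti, Pi.single_eq_same]
  simp [wform, MultilinearMap.compLinearMap_apply, MultilinearMap.mkPiAlgebra_apply,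
    Fin.prod_univ_two]

end aux

set_option maxHeartbeats 1000000 in
/-- Lemma A.2: in a 4-dimensional space, if `e^1, e^2, e^3` are linearly independent 1-forms and
`ε_{ijk} e^j ∧ S^k = 0` for each `i`, then `S^i = 0`. -/
theorem stmt1 (V : Type*) [AddCommGroup V] [Module ℝ V]
    (hV : Module.finrank ℝ V = 4)
    (e S : Fin 3 → V) (he : LinearIndependent ℝ e)
    (h : ∀ i, ∑ j, ∑ k, eps3 i j k •
      (ExteriorAlgebra.ι ℝ (e j) * ExteriorAlgebra.ι ℝ (S k)) = (0 : ExteriorAlgebra ℝ V)) :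
    ∀ i, S i = 0 := by
  haveI : Module.Finite ℝ V := Module.finite_of_finrank_pos (by rw [hV]; norm_num)
  obtain ⟨x, hx⟩ := exists_linearIndependent_snoc_of_lt_finrank he (by rw [hV]; norm_num)
  let b : Module.Basis (Fin 4) ℝ V := basisOfLinearIndependentOfCardEqFinrank hx (by simp [hV])
  have hbe : ∀ j : Fin 3, b (Fin.castSucc j) = e j := by
    intro j
    have : (b : Fin 4 → V) = Fin.snoc e x := coe_basisOfLinearIndependentOfCardEqFinrank hx _
    rw [this, Fin.snoc_castSucc]
  have hc : ∀ (j : Fin 3) (p : Fin 4),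
      b.coord p (e j) = if Fin.castSucc j = p then 1 else 0 := by
    intro j p
    rw [← hbe j, Module.Basis.coord_apply, b.repr_self, Finsupp.single_apply]
  have key : ∀ (i : Fin 3) (p q : Fin 4),
      ∑ j, ∑ k, eps3 i j k * ((if Fin.castSucc j = p then (1:ℝ) else 0) * b.coord q (S k)
        - (if Fin.castSucc j = q then (1:ℝ) else 0) * b.coord p (S k)) = 0 := by
    intro i p q
    have h0 := congrArg (liftAlternating (R := ℝ) (Pi.single 2 (wform (b.coord p) (b.coord q)))) (h i)
    simp only [map_sum, map_smul, lift_wform, smul_eq_mul, map_zero, hc] at h0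
    exact h0
  have z : ∀ (k : Fin 3) (p : Fin 4), b.coord p (S k) = 0 := by
    have k013 := key 0 1 3
    simp only [Fin.sum_univ_three] at k013
    norm_num [eps3, Fin.ext_iff, show ((3:Fin 4):ℕ) = 3 from rfl, show ((2:Fin 4):ℕ) = 2 from rfl, show ((1:Fin 4):ℕ) = 1 from rfl] at k013
    have k023 := key 0 2 3
    simp only [Fin.sum_univ_three] at k023
    norm_num [eps3, Fin.ext_iff, show ((3:Fin 4):ℕ) = 3 from rfl, show ((2:Fin 4):ℕ) = 2 from rfl, show ((1:Fin 4):ℕ) = 1 from rfl] at k023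
    have k123 := key 1 2 3
    simp only [Fin.sum_univ_three] at k123
    norm_num [eps3, Fin.ext_iff, show ((3:Fin 4):ℕ) = 3 from rfl, show ((2:Fin 4):ℕ) = 2 from rfl, show ((1:Fin 4):ℕ) = 1 from rfl] at k123
    have k010 := key 0 1 0
    simp only [Fin.sum_univ_three] at k010
    norm_num [eps3, Fin.ext_iff, show ((3:Fin 4):ℕ) = 3 from rfl, show ((2:Fin 4):ℕ) = 2 from rfl, show ((1:Fin 4):ℕ) = 1 from rfl] at k010
    have k020 := key 0 2 0
    simp only [Fin.sum_univ_three] at k020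
    norm_num [eps3, Fin.ext_iff, show ((3:Fin 4):ℕ) = 3 from rfl, show ((2:Fin 4):ℕ) = 2 from rfl, show ((1:Fin 4):ℕ) = 1 from rfl] at k020
    have k012 := key 0 1 2
    simp only [Fin.sum_univ_three] at k012
    norm_num [eps3, Fin.ext_iff, show ((3:Fin 4):ℕ) = 3 from rfl, show ((2:Fin 4):ℕ) = 2 from rfl, show ((1:Fin 4):ℕ) = 1 from rfl] at k012
    have k121 := key 1 2 1
    simp only [Fin.sum_univ_three] at k121
    norm_num [eps3, Fin.ext_iff, show ((3:Fin 4):ℕ) = 3 from rfl, show ((2:Fin 4):ℕ) = 2 from rfl, show ((1:Fin 4):ℕ) = 1 from rfl] at k121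
    have k120 := key 1 2 0
    simp only [Fin.sum_univ_three] at k120
    norm_num [eps3, Fin.ext_iff, show ((3:Fin 4):ℕ) = 3 from rfl, show ((2:Fin 4):ℕ) = 2 from rfl, show ((1:Fin 4):ℕ) = 1 from rfl] at k120
    have k201 := key 2 0 1
    simp only [Fin.sum_univ_three] at k201
    norm_num [eps3, Fin.ext_iff, show ((3:Fin 4):ℕ) = 3 from rfl, show ((2:Fin 4):ℕ) = 2 from rfl, show ((1:Fin 4):ℕ) = 1 from rfl] at k201
    have k101 := key 1 0 1
    simp only [Fin.sum_univ_three] at k101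
    norm_num [eps3, Fin.ext_iff, show ((3:Fin 4):ℕ) = 3 from rfl, show ((2:Fin 4):ℕ) = 2 from rfl, show ((1:Fin 4):ℕ) = 1 from rfl] at k101
    have k202 := key 2 0 2
    simp only [Fin.sum_univ_three] at k202
    norm_num [eps3, Fin.ext_iff, show ((3:Fin 4):ℕ) = 3 from rfl, show ((2:Fin 4):ℕ) = 2 from rfl, show ((1:Fin 4):ℕ) = 1 from rfl] at k202
    have k212 := key 2 1 2
    simp only [Fin.sum_univ_three] at k212
    norm_num [eps3, Fin.ext_iff, show ((3:Fin 4):ℕ) = 3 from rfl, show ((2:Fin 4):ℕ) = 2 from rfl, show ((1:Fin 4):ℕ) = 1 from rfl] at k212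
    have z03 : b.repr (S 0) 3 = 0 := k123
    have z13 : b.repr (S 1) 3 = 0 := k023
    have z23 : b.repr (S 2) 3 = 0 := k013
    have z20 : b.repr (S 2) 0 = 0 := k010
    have z10 : b.repr (S 1) 0 = 0 := k020
    have z01 : b.repr (S 0) 1 = 0 := k121
    have z21 : b.repr (S 2) 1 = 0 := k101
    have z12 : b.repr (S 1) 2 = 0 := k202
    have z02 : b.repr (S 0) 2 = 0 := k212
    have z00 : b.repr (S 0) 0 = 0 := by linarith
    have z11 : b.repr (S 1) 1 = 0 := by linarith
    have z22 : b.repr (S 2) 2 = 0 := by linarith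
    intro k p
    rw [Module.Basis.coord_apply]
    fin_cases k <;> fin_cases p <;>
      first
      | exact z00 | exact z01 | exact z02 | exact z03
      | exact z10 | exact z11 | exact z12 | exact z13
      | exact z20 | exact z21 | exact z22 | exact z23
  intro i
  rw [← b.forall_coord_eq_zero_iff]
  intro p
  exact z i p
end

section
/- Let V be a 4-dimensional real vector space and (e^0,...,e^3) a basis of V* with volume element vol = (1/4!) ε_{IJKL} e^I ∧ e^J ∧ e^K ∧ e^L. Given 2-forms Φ_I ∈ Λ²V*, the family of 1-forms Z_{IJ} := (1/2) ε_{PQK[I}(Φ_{J]} ∧ e^P ∧ e^Q / vol) e^K − (1/4) ε_{IJPQ}(Φ_K ∧ e^P ∧ e^Q / vol) e^K is antisymmetric in (I,J) and satisfies e^J ∧ Z_{IJ} = Φ_I for every I. -/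
open ExteriorAlgebra

/-- The 4-dimensional Levi-Civita symbol with `eps4 0 1 2 3 = 1`. -/
noncomputable def eps4 (I J K L : Fin 4) : ℝ :=
  (((J.val : ℝ) - I.val) * ((K.val : ℝ) - I.val) * ((L.val : ℝ) - I.val) *
    ((K.val : ℝ) - J.val) * ((L.val : ℝ) - J.val) * ((L.val : ℝ) - K.val)) / 12

/-- Integer version of the Levi-Civita symbol. -/
def epsZ (I J K L : Fin 4) : ℤ :=
  (((J.val : ℤ) - I.val) * ((K.val : ℤ) - I.val) * ((L.val : ℤ) - I.val) *
    ((K.val : ℤ) - J.val) * ((L.val : ℤ) - J.val) * ((L.val : ℤ) - K.val)) / 12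

lemma dvd12 : ∀ I J K L : Fin 4, (12:ℤ) ∣ (((J.val : ℤ) - I.val) * ((K.val : ℤ) - I.val) *
    ((L.val : ℤ) - I.val) * ((K.val : ℤ) - J.val) * ((L.val : ℤ) - J.val) *
    ((L.val : ℤ) - K.val)) := by decide

lemma eps4_eq (I J K L : Fin 4) : eps4 I J K L = (epsZ I J K L : ℝ) := by
  unfold eps4 epsZ
  rw [Int.cast_div_charZero (dvd12 I J K L)]
  push_cast; ring

lemma epsZ_sign : ∀ σ : Equiv.Perm (Fin 4),
    (Equiv.Perm.sign σ : ℤ) = epsZ (σ 0) (σ 1) (σ 2) (σ 3) := by decide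

lemma epsZ_zero : ∀ A B P Q : Fin 4, ¬ Function.Injective ![A,B,P,Q] → epsZ A B P Q = 0 := by
  decide

lemma sum24Z : ∑ I, ∑ J, ∑ K, ∑ L, epsZ I J K L * epsZ I J K L = 24 := by decide

lemma sum24R : ∑ I, ∑ J, ∑ K, ∑ L, eps4 I J K L * eps4 I J K L = (24:ℝ) := by
  simp only [eps4_eq]
  exact_mod_cast sum24Z

def dZ (i j : Fin 4) : ℤ := if i = j then 1 else 0
noncomputable def dR (i j : Fin 4) : ℝ := if i = j then 1 else 0

lemma dR_eq (i j : Fin 4) : dR i j = (dZ i j : ℝ) := by unfold dR dZ; split_ifs <;> simp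

lemma contractZ : ∀ A B C D : Fin 4, ∑ P, ∑ Q, epsZ C D P Q * epsZ A B P Q
    = 2 * (dZ A C * dZ B D - dZ A D * dZ B C) := by decide

lemma epsc1 (a b c d : Fin 4) : eps4 a b c d + eps4 d c a b = 0 := by unfold eps4; ring
lemma epsc2 (a b c d : Fin 4) : eps4 a b c d + eps4 c d b a = 0 := by unfold eps4; ring

lemma contractR (A B C D : Fin 4) : ∑ P, ∑ Q, eps4 C D P Q * eps4 A B P Q
    = 2 * (dR A C * dR B D - dR A D * dR B C) := by
  simp only [eps4_eq, dR_eq]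
  exact_mod_cast contractZ A B C D

lemma sum_comm3 {M : Type*} [AddCommMonoid M] (f : Fin 4 → Fin 4 → Fin 4 → M) :
    ∑ p, ∑ q, ∑ k, f p q k = ∑ k, ∑ p, ∑ q, f p q k := by
  have h1 : ∀ p, ∑ q, ∑ k, f p q k = ∑ k, ∑ q, f p q k := fun p => Finset.sum_comm
  simp_rw [h1]
  exact Finset.sum_comm

lemma sum_swap4 {M : Type*} [AddCommMonoid M] (f : Fin 4 → Fin 4 → Fin 4 → Fin 4 → M) :
    ∑ p, ∑ q, ∑ a, ∑ b, f p q a b = ∑ a, ∑ b, ∑ p, ∑ q, f p q a b := by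
  have h1 : ∀ p, ∑ q, ∑ a, ∑ b, f p q a b = ∑ a, ∑ q, ∑ b, f p q a b :=
    fun p => Finset.sum_comm
  simp_rw [h1]
  rw [Finset.sum_comm]
  exact Finset.sum_congr rfl fun a _ => sum_comm3 _

section ExtAlg

variable {V : Type*} [AddCommGroup V] [Module ℝ V] (b : Module.Basis (Fin 4) ℝ V)

lemma hswap (x y : V) : ι ℝ x * ι ℝ y = -(ι ℝ y * ι ℝ x) :=
  eq_neg_of_add_eq_zero_left (ι_add_mul_swap x y)

lemma prod_eq_ιMulti (v : Fin 4 → V) :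
    ι ℝ (v 0) * ι ℝ (v 1) * ι ℝ (v 2) * ι ℝ (v 3) = ιMulti ℝ 4 v := by
  rw [ιMulti_apply]
  simp [List.ofFn_succ, mul_assoc, show (Fin.succ 2 : Fin 4) = 3 from rfl]

lemma quad (A B P Q : Fin 4) :
    ι ℝ (b A) * ι ℝ (b B) * ι ℝ (b P) * ι ℝ (b Q) =
      eps4 A B P Q • (ι ℝ (b 0) * ι ℝ (b 1) * ι ℝ (b 2) * ι ℝ (b 3)) := by
  set f : Fin 4 → Fin 4 := ![A, B, P, Q] with hf
  have hA : f 0 = A := rfl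
  have hB : f 1 = B := rfl
  have hP : f 2 = P := rfl
  have hQ : f 3 = Q := rfl
  rw [← hA, ← hB, ← hP, ← hQ]
  have h1 : ι ℝ (b (f 0)) * ι ℝ (b (f 1)) * ι ℝ (b (f 2)) * ι ℝ (b (f 3))
      = ιMulti ℝ 4 (fun i => b (f i)) := prod_eq_ιMulti fun i => b (f i)
  have h0 : ι ℝ (b 0) * ι ℝ (b 1) * ι ℝ (b 2) * ι ℝ (b 3)
      = ιMulti ℝ 4 (fun i => b i) := prod_eq_ιMulti fun i => b i
  rw [h1, h0]
  by_cases hinj : Function.Injective f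
  · have hbij := Finite.injective_iff_bijective.mp hinj
    set σ : Equiv.Perm (Fin 4) := Equiv.ofBijective f hbij with hσ
    have : (fun i => b (f i)) = (fun i => b i) ∘ σ := by funext i; rfl
    rw [this, AlternatingMap.map_perm]
    have hsgn : eps4 (f 0) (f 1) (f 2) (f 3) = ((Equiv.Perm.sign σ : ℤ) : ℝ) := by
      rw [eps4_eq, epsZ_sign σ]; rfl
    rw [hsgn, Units.smul_def, Int.cast_smul_eq_zsmul]
  · rw [AlternatingMap.map_eq_zero_of_not_injective _ _ (fun h => hinj (fun x y hxy => by
      have := h (congrArg b hxy); exact this))]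
    have : eps4 (f 0) (f 1) (f 2) (f 3) = 0 := by
      rw [eps4_eq]
      exact_mod_cast epsZ_zero A B P Q hinj
    rw [this, zero_smul]

noncomputable def lamF (b : Module.Basis (Fin 4) ℝ V) : ∀ i, V [⋀^Fin i]→ₗ[ℝ] ℝ := fun i =>
  match i with
  | 4 => b.det
  | _ => 0

noncomputable def lam (b : Module.Basis (Fin 4) ℝ V) : ExteriorAlgebra ℝ V →ₗ[ℝ] ℝ :=
  liftAlternating (lamF b)

lemma lam_w0 : lam b (ι ℝ (b 0) * ι ℝ (b 1) * ι ℝ (b 2) * ι ℝ (b 3)) = 1 := by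
  rw [prod_eq_ιMulti fun i => b i]
  rw [lam, liftAlternating_apply_ιMulti]
  show b.det (fun i => b i) = 1
  have : (fun i => b i) = ⇑b := rfl
  rw [this, Module.Basis.det_self]

lemma lam_quad (A B P Q : Fin 4) :
    lam b (ι ℝ (b A) * ι ℝ (b B) * ι ℝ (b P) * ι ℝ (b Q)) = eps4 A B P Q := by
  rw [quad b, map_smul, lam_w0, smul_eq_mul, mul_one]

/-- Antisymmetry kills symmetric coefficient families. -/
lemma AS (c : Fin 4 → Fin 4 → ℝ) (h : ∀ J K, c J K = c K J) :
    ∑ J, ∑ K, c J K • (ι ℝ (b J) * ι ℝ (b K)) = 0 := by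
  have key : ∑ J, ∑ K, c J K • (ι ℝ (b J) * ι ℝ (b K))
      = - ∑ J, ∑ K, c J K • (ι ℝ (b J) * ι ℝ (b K)) := by
    calc ∑ J, ∑ K, c J K • (ι ℝ (b J) * ι ℝ (b K))
        = ∑ J, ∑ K, c J K • (-(ι ℝ (b K) * ι ℝ (b J))) := by
          exact Finset.sum_congr rfl fun J _ => Finset.sum_congr rfl fun K _ => by
            rw [hswap]
      _ = - ∑ J, ∑ K, c J K • (ι ℝ (b K) * ι ℝ (b J)) := by
          simp [smul_neg, Finset.sum_neg_distrib]
      _ = - ∑ K, ∑ J, c J K • (ι ℝ (b K) * ι ℝ (b J)) := by rw [Finset.sum_comm]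
      _ = - ∑ J, ∑ K, c J K • (ι ℝ (b J) * ι ℝ (b K)) := by
          congr 1
          exact Finset.sum_congr rfl fun K _ => Finset.sum_congr rfl fun J _ => by
            rw [h K J]
  have h2 : (2:ℝ) • (∑ J, ∑ K, c J K • (ι ℝ (b J) * ι ℝ (b K))) = 0 := by
    rw [two_smul]
    nth_rewrite 2 [key]
    exact add_neg_cancel _
  rcases smul_eq_zero.mp h2 with h | h
  · norm_num at h
  · exact h

lemma sum3_neg_congr (f g : Fin 4 → Fin 4 → Fin 4 → ℝ) (v : Fin 4 → ExteriorAlgebra ℝ V)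
    (h : ∀ p q k, f p q k = - g p q k) :
    ∑ p, ∑ q, ∑ k, f p q k • v k = - ∑ p, ∑ q, ∑ k, g p q k • v k := by
  simp_rw [h, neg_smul, Finset.sum_neg_distrib]


lemma SC (r s : Fin 4 → ℝ) (C D : Fin 4) :
    (4:ℝ)⁻¹ * ∑ P, ∑ Q, (eps4 C D P Q * ∑ A, ∑ B, (r A * s B) * eps4 A B P Q)
    = (1/2:ℝ) * (r C * s D) - (1/2:ℝ) * (r D * s C) := by
  have h0 : ∀ P Q : Fin 4, eps4 C D P Q * ∑ A, ∑ B, (r A * s B) * eps4 A B P Q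
      = ∑ A, ∑ B, eps4 C D P Q * ((r A * s B) * eps4 A B P Q) := by
    intro P Q
    rw [Finset.mul_sum]
    exact Finset.sum_congr rfl fun A _ => by rw [Finset.mul_sum]
  simp_rw [h0]
  rw [sum_swap4]
  have h1 : ∀ A B : Fin 4, ∑ P, ∑ Q, eps4 C D P Q * ((r A * s B) * eps4 A B P Q)
      = (r A * s B) * (2 * (dR A C * dR B D - dR A D * dR B C)) := by
    intro A B
    rw [← contractR A B C D, Finset.mul_sum]
    refine Finset.sum_congr rfl fun P _ => ?_
    rw [Finset.mul_sum]
    exact Finset.sum_congr rfl fun Q _ => by ring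
  simp_rw [h1]
  simp only [dR, mul_ite, ite_mul, mul_zero, zero_mul, mul_one, one_mul, mul_sub,
    Finset.sum_ite_eq, Finset.sum_ite_eq', Finset.mem_univ, if_true, Finset.sum_sub_distrib]
  ring

/-- Every element of degree two is determined by its products with pairs of basis vectors. -/
lemma rep2 (x : ExteriorAlgebra ℝ V)
    (hx : x ∈ (LinearMap.range (ι ℝ : V →ₗ[ℝ] ExteriorAlgebra ℝ V)) ^ 2) :
    x = (4:ℝ)⁻¹ • ∑ C, ∑ D, ∑ P, ∑ Q,
      (eps4 C D P Q * lam b (x * ι ℝ (b P) * ι ℝ (b Q))) • (ι ℝ (b C) * ι ℝ (b D)) := by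
  rw [pow_two] at hx
  refine Submodule.mul_induction_on hx ?_ ?_
  · rintro m ⟨v, rfl⟩ n ⟨w, rfl⟩
    set r : Fin 4 → ℝ := fun A => b.repr v A with hr
    set s : Fin 4 → ℝ := fun A => b.repr w A with hs
    have hv : (ι ℝ : V →ₗ[ℝ] ExteriorAlgebra ℝ V) v = ∑ A, r A • ι ℝ (b A) := by
      conv_lhs => rw [← b.sum_repr v]
      rw [map_sum]
      exact Finset.sum_congr rfl fun A _ => by rw [map_smul]
    have hw : (ι ℝ : V →ₗ[ℝ] ExteriorAlgebra ℝ V) w = ∑ A, s A • ι ℝ (b A) := by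
      conv_lhs => rw [← b.sum_repr w]
      rw [map_sum]
      exact Finset.sum_congr rfl fun A _ => by rw [map_smul]
    have hvw : ι ℝ v * ι ℝ w = ∑ A, ∑ B, (r A * s B) • (ι ℝ (b A) * ι ℝ (b B)) := by
      rw [hv, hw, Finset.sum_mul_sum]
      simp_rw [smul_mul_smul_comm]
    have hlam2 : ∀ P Q : Fin 4, lam b (ι ℝ v * ι ℝ w * ι ℝ (b P) * ι ℝ (b Q))
        = ∑ A, ∑ B, (r A * s B) * eps4 A B P Q := by
      intro P Q
      rw [hvw]
      simp only [Finset.sum_mul, smul_mul_assoc, map_sum, map_smul, lam_quad, smul_eq_mul]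
    simp_rw [hlam2]
    rw [hvw]
    have hcol : ∀ C D : Fin 4, ∑ P, ∑ Q,
        (eps4 C D P Q * ∑ A, ∑ B, (r A * s B) * eps4 A B P Q) • (ι ℝ (b C) * ι ℝ (b D))
        = ((4:ℝ) * ((4:ℝ)⁻¹ * ∑ P, ∑ Q, (eps4 C D P Q * ∑ A, ∑ B, (r A * s B) * eps4 A B P Q)))
            • (ι ℝ (b C) * ι ℝ (b D)) := by
      intro C D
      rw [← mul_assoc]
      norm_num
      simp only [Finset.sum_smul]
    simp_rw [hcol, SC r s]
    rw [Finset.smul_sum]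
    simp_rw [Finset.smul_sum, smul_smul]
    have hfin : ∀ C D : Fin 4, (4:ℝ)⁻¹ * ((4:ℝ) * ((1/2:ℝ) * (r C * s D) - (1/2:ℝ) * (r D * s C)))
        = (1/2:ℝ) * (r C * s D) - (1/2:ℝ) * (r D * s C) := by intro C D; ring
    simp_rw [hfin]
    -- now: ∑ A, ∑ B, (r A * s B) • (e A * e B) = ∑ C, ∑ D, (1/2 (rC sD) - 1/2 (rD sC)) • (eC eD)
    simp only [sub_smul]
    simp only [Finset.sum_sub_distrib]
    have h2 : ∑ C, ∑ D, ((1/2:ℝ) * (r D * s C)) • (ι ℝ (b C) * ι ℝ (b D))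
        = - ∑ C, ∑ D, ((1/2:ℝ) * (r C * s D)) • (ι ℝ (b C) * ι ℝ (b D)) := by
      rw [Finset.sum_comm]
      have hp : ∀ x y : Fin 4, ((1/2:ℝ) * (r x * s y)) • (ι ℝ (b y) * ι ℝ (b x))
          = -(((1/2:ℝ) * (r x * s y)) • (ι ℝ (b x) * ι ℝ (b y))) := by
        intro x y
        rw [hswap (b y) (b x), smul_neg]
      simp_rw [hp, Finset.sum_neg_distrib]
    rw [h2, sub_neg_eq_add, ← Finset.sum_add_distrib]
    refine Finset.sum_congr rfl fun A _ => ?_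
    rw [← Finset.sum_add_distrib]
    refine Finset.sum_congr rfl fun B _ => ?_
    rw [← add_smul]
    congr 1
    ring
  · intro y z hy hz
    simp only [add_mul, map_add, mul_add, add_smul, Finset.sum_add_distrib, smul_add]
    rw [← hy, ← hz]

end ExtAlg

set_option maxRecDepth 8000 in
set_option maxHeartbeats 2000000 in
/-- Lemma A.5: given 2-forms `Φ_I`, the 1-forms
`Z_{IJ} = (1/2) ε_{PQK[I}(Φ_{J]} ∧ e^P ∧ e^Q / vol) e^K
        - (1/4) ε_{IJPQ}(Φ_K ∧ e^P ∧ e^Q / vol) e^K`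
are antisymmetric in `(I,J)` and solve `e^J ∧ Z_{IJ} = Φ_I`.
Here `t J P Q = (Φ_J ∧ e^P ∧ e^Q)/vol`. -/
theorem stmt4 (V : Type*) [AddCommGroup V] [Module ℝ V]
    (b : Module.Basis (Fin 4) ℝ V)
    (vol : ExteriorAlgebra ℝ V)
    (hvol : vol = (24 : ℝ)⁻¹ • ∑ I, ∑ J, ∑ K, ∑ L, eps4 I J K L •
      (ExteriorAlgebra.ι ℝ (b I) * ExteriorAlgebra.ι ℝ (b J) *
        ExteriorAlgebra.ι ℝ (b K) * ExteriorAlgebra.ι ℝ (b L)))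
    (Φ : Fin 4 → ExteriorAlgebra ℝ V)
    (hΦ : ∀ I, Φ I ∈ (LinearMap.range (ExteriorAlgebra.ι ℝ : V →ₗ[ℝ] ExteriorAlgebra ℝ V)) ^ 2)
    (t : Fin 4 → Fin 4 → Fin 4 → ℝ)
    (ht : ∀ J P Q, Φ J * ExteriorAlgebra.ι ℝ (b P) * ExteriorAlgebra.ι ℝ (b Q) = t J P Q • vol)
    (Z : Fin 4 → Fin 4 → ExteriorAlgebra ℝ V)
    (hZ : ∀ I J, Z I J =
      (1/2 : ℝ) • ((1/2 : ℝ) • ∑ P, ∑ Q, ∑ K,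
        (eps4 P Q K I * t J P Q - eps4 P Q K J * t I P Q) • ExteriorAlgebra.ι ℝ (b K)) -
      (1/4 : ℝ) • ∑ P, ∑ Q, ∑ K,
        (eps4 I J P Q * t K P Q) • ExteriorAlgebra.ι ℝ (b K)) :
    (∀ I J, Z I J = - Z J I) ∧
    ∀ I, ∑ J, ExteriorAlgebra.ι ℝ (b J) * Z I J = Φ I := by
  have hw : vol = ι ℝ (b 0) * ι ℝ (b 1) * ι ℝ (b 2) * ι ℝ (b 3) := by
    rw [hvol]
    have hkey : ∀ I J K L : Fin 4, eps4 I J K L •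
        (ι ℝ (b I) * ι ℝ (b J) * ι ℝ (b K) * ι ℝ (b L)) =
        (eps4 I J K L * eps4 I J K L) • (ι ℝ (b 0) * ι ℝ (b 1) * ι ℝ (b 2) * ι ℝ (b 3)) := by
      intro I J K L
      rw [quad b, smul_smul]
    simp_rw [hkey, ← Finset.sum_smul]
    rw [sum24R, smul_smul]
    norm_num
  have hlamvol : lam b vol = 1 := by rw [hw]; exact lam_w0 b
  have hlam : ∀ J P Q, lam b (Φ J * ι ℝ (b P) * ι ℝ (b Q)) = t J P Q := by
    intro J P Q
    rw [ht, map_smul, hlamvol, smul_eq_mul, mul_one]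
  constructor
  · intro I J
    rw [hZ I J, hZ J I]
    rw [sum3_neg_congr (fun p q k => eps4 p q k J * t I p q - eps4 p q k I * t J p q)
      (fun p q k => eps4 p q k I * t J p q - eps4 p q k J * t I p q) _
      (fun p q k => by ring)]
    rw [sum3_neg_congr (fun p q k => eps4 J I p q * t k p q)
      (fun p q k => eps4 I J p q * t k p q) _
      (fun p q k => by unfold eps4; ring)]
    module
  · intro I
    have hrep := rep2 b (Φ I) (hΦ I)
    simp_rw [hlam] at hrep
    have hcolg : ∀ C D : Fin 4, ∑ P, ∑ Q,
        (eps4 C D P Q * t I P Q) • (ι ℝ (b C) * ι ℝ (b D))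
        = (∑ P, ∑ Q, eps4 C D P Q * t I P Q) • (ι ℝ (b C) * ι ℝ (b D)) := by
      intro C D; simp only [Finset.sum_smul]
    simp_rw [hcolg] at hrep
    rw [Finset.smul_sum] at hrep
    simp_rw [Finset.smul_sum, smul_smul] at hrep
    -- hrep : Φ I = ∑ C, ∑ D, ((4)⁻¹ * ∑ P, ∑ Q, eps4 C D P Q * t I P Q) • (eC * eD)
    have hclaim : ∀ J : Fin 4, ι ℝ (b J) * Z I J
        = ∑ K, ((1/2:ℝ) * ((1/2:ℝ) * ∑ P, ∑ Q,
              (eps4 P Q K I * t J P Q - eps4 P Q K J * t I P Q))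
            - (1/4:ℝ) * ∑ P, ∑ Q, (eps4 I J P Q * t K P Q))
            • (ι ℝ (b J) * ι ℝ (b K)) := by
      intro J
      rw [hZ I J, mul_sub]
      rw [mul_smul_comm, mul_smul_comm, mul_smul_comm]
      simp only [Finset.mul_sum, mul_smul_comm]
      rw [sum_comm3 (fun p q k =>
        (eps4 p q k I * t J p q - eps4 p q k J * t I p q) • (ι ℝ (b J) * ι ℝ (b k)))]
      rw [sum_comm3 (fun p q k => (eps4 I J p q * t k p q) • (ι ℝ (b J) * ι ℝ (b k)))]
      have hc1 : ∀ K : Fin 4, ∑ P, ∑ Q,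
          (eps4 P Q K I * t J P Q - eps4 P Q K J * t I P Q) • (ι ℝ (b J) * ι ℝ (b K))
          = (∑ P, ∑ Q, (eps4 P Q K I * t J P Q - eps4 P Q K J * t I P Q))
              • (ι ℝ (b J) * ι ℝ (b K)) := by
        intro K; simp only [Finset.sum_smul]
      have hc2 : ∀ K : Fin 4, ∑ P, ∑ Q,
          (eps4 I J P Q * t K P Q) • (ι ℝ (b J) * ι ℝ (b K))
          = (∑ P, ∑ Q, eps4 I J P Q * t K P Q) • (ι ℝ (b J) * ι ℝ (b K)) := by
        intro K; simp only [Finset.sum_smul]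
      simp_rw [hc1, hc2]
      rw [Finset.smul_sum, Finset.smul_sum, Finset.smul_sum, ← Finset.sum_sub_distrib]
      refine Finset.sum_congr rfl fun K _ => ?_
      rw [smul_smul, smul_smul, smul_smul, ← sub_smul]
      congr 1
      simp only [Finset.mul_sum, ← Finset.sum_sub_distrib]
      refine Finset.sum_congr rfl fun p _ => Finset.sum_congr rfl fun q _ => ?_
      ring
    have hsym : ∀ J K : Fin 4,
        (((1/2:ℝ) * ((1/2:ℝ) * ∑ P, ∑ Q,
            (eps4 P Q K I * t J P Q - eps4 P Q K J * t I P Q))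
          - (1/4:ℝ) * ∑ P, ∑ Q, (eps4 I J P Q * t K P Q))
          - (4:ℝ)⁻¹ * ∑ P, ∑ Q, eps4 J K P Q * t I P Q)
        = (((1/2:ℝ) * ((1/2:ℝ) * ∑ P, ∑ Q,
            (eps4 P Q J I * t K P Q - eps4 P Q J K * t I P Q))
          - (1/4:ℝ) * ∑ P, ∑ Q, (eps4 I K P Q * t J P Q))
          - (4:ℝ)⁻¹ * ∑ P, ∑ Q, eps4 K J P Q * t I P Q) := by
      intro J K
      simp only [Finset.mul_sum, ← Finset.sum_sub_distrib]
      refine Finset.sum_congr rfl fun P _ => ?_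
      refine Finset.sum_congr rfl fun Q _ => ?_
      linear_combination ((1/4:ℝ) * t J P Q) * epsc1 P Q K I
        - ((1/4:ℝ) * t K P Q) * epsc2 I J P Q
        - ((1/4:ℝ) * t I P Q) * epsc1 P Q K J
        + ((1/4:ℝ) * t I P Q) * epsc1 P Q J K
    calc ∑ J, ι ℝ (b J) * Z I J
        = ∑ J, ∑ K, ((1/2:ℝ) * ((1/2:ℝ) * ∑ P, ∑ Q,
              (eps4 P Q K I * t J P Q - eps4 P Q K J * t I P Q))
            - (1/4:ℝ) * ∑ P, ∑ Q, (eps4 I J P Q * t K P Q))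
            • (ι ℝ (b J) * ι ℝ (b K)) := Finset.sum_congr rfl fun J _ => hclaim J
      _ = ∑ J, ∑ K, ((((4:ℝ)⁻¹ * ∑ P, ∑ Q, eps4 J K P Q * t I P Q)
            + (((1/2:ℝ) * ((1/2:ℝ) * ∑ P, ∑ Q,
                (eps4 P Q K I * t J P Q - eps4 P Q K J * t I P Q))
              - (1/4:ℝ) * ∑ P, ∑ Q, (eps4 I J P Q * t K P Q))
              - (4:ℝ)⁻¹ * ∑ P, ∑ Q, eps4 J K P Q * t I P Q)))
            • (ι ℝ (b J) * ι ℝ (b K)) := by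
          refine Finset.sum_congr rfl fun J _ => Finset.sum_congr rfl fun K _ => ?_
          congr 1
          ring
      _ = (∑ J, ∑ K, ((4:ℝ)⁻¹ * ∑ P, ∑ Q, eps4 J K P Q * t I P Q)
              • (ι ℝ (b J) * ι ℝ (b K)))
          + ∑ J, ∑ K, ((((1/2:ℝ) * ((1/2:ℝ) * ∑ P, ∑ Q,
                (eps4 P Q K I * t J P Q - eps4 P Q K J * t I P Q))
              - (1/4:ℝ) * ∑ P, ∑ Q, (eps4 I J P Q * t K P Q))
              - (4:ℝ)⁻¹ * ∑ P, ∑ Q, eps4 J K P Q * t I P Q))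
              • (ι ℝ (b J) * ι ℝ (b K)) := by
          simp only [add_smul, Finset.sum_add_distrib]
      _ = Φ I + 0 := by
          rw [← hrep, AS b _ hsym]
      _ = Φ I := add_zero _
end
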